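/- Let μ be a finite, compactly-supported Borel measure on ℝ^n. Let h: ℝ^n → ℝ be a bounded, measurable function with ∫ h dμ = 0. For sufficiently small ε > 0, let μ_ε be the measure whose density with respect to μ is the non-negative function 1 + εh. Then ‖h‖_{H^{−1}(μ)} ≤ liminf_{ε → 0^+} W₂(μ, μ_ε)/ε. -/

import Mathlib

open MeasureTheory Real

/-- The L²-Wasserstein distance: infimum over couplings γ of μ₁ and μ₂ of
`(∫ |x-y|² dγ)^{1/2}`, equal to `∞` (the empty infimum) if there is no coupling. -/
noncomputable def W2 {n : ℕ} (μ₁ μ₂ : Measure (EuclideanSpace ℝ (Fin n))) : ENNReal :=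
  ⨅ γ : {γ : Measure (EuclideanSpace ℝ (Fin n) × EuclideanSpace ℝ (Fin n)) //
      γ.map Prod.fst = μ₁ ∧ γ.map Prod.snd = μ₂},
    (∫⁻ p, ENNReal.ofReal (‖p.1 - p.2‖ ^ 2) ∂γ.1) ^ (1 / 2 : ℝ)

/-- `‖u‖_{H^{-1}(μ)} = sup { ∫ u φ dμ : φ ∈ C^∞(ℝⁿ), ∫ |∇φ|² dμ ≤ 1 }` (in `[0,∞]`). -/
noncomputable def Hm1Mu {n : ℕ} (μ : Measure (EuclideanSpace ℝ (Fin n)))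
    (u : EuclideanSpace ℝ (Fin n) → ℝ) : ENNReal :=
  ⨆ φ : {φ : EuclideanSpace ℝ (Fin n) → ℝ //
      ContDiff ℝ (⊤ : ℕ∞) φ ∧ (∫ x, ‖gradient φ x‖ ^ 2 ∂μ) ≤ 1},
    ENNReal.ofReal (∫ x, u x * φ.1 x ∂μ)

/-!
If γ couples μ with μ_ε, then `ε ∫ h φ dμ = ∫ (φ y - φ x) dγ(x, y)`. On the compact support,
`φ y - φ x ≤ ⟪∇φ x, y - x⟫ + C ‖y - x‖²`, and `⟪g, d⟫ ≤ (s/2) ‖g‖² + ‖d‖² / (2s)`; so if the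
cost of γ is at most `s²` and `∫ ‖∇φ‖² dμ ≤ 1`, the right-hand side is at most `s + C s²`.
Whenever `W₂(μ, μ_ε) < c ε` this yields `∫ h φ dμ ≤ c + C c² ε`, and letting `ε → 0⁺` along
such ε bounds `∫ h φ dμ` by any `c` above the liminf.
-/

open Filter Topology
open scoped InnerProductSpace

section Taylor

variable {E F : Type*} [NormedAddCommGroup E] [NormedSpace ℝ E]
  [NormedAddCommGroup F] [NormedSpace ℝ F]

theorem Convex.norm_sub_sub_fderiv_le_of_lipschitzOnWith {f : E → F} {s : Set E} {L : NNReal}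
    (hs : Convex ℝ s) (hf : ∀ x ∈ s, DifferentiableAt ℝ f x)
    (hf' : LipschitzOnWith L (fderiv ℝ f) s) {x y : E} (hx : x ∈ s) (hy : y ∈ s) :
    ‖f y - f x - fderiv ℝ f x (y - x)‖ ≤ L * ‖y - x‖ ^ 2 := by
  have hseg := hs.segment_subset hx hy
  have hbound : ∀ u ∈ segment ℝ x y, ‖fderiv ℝ f u - fderiv ℝ f x‖ ≤ L * ‖y - x‖ := by
    intro u hu
    have hux : ‖u - x‖ ≤ ‖y - x‖ := by
      have := dist_add_dist_of_mem_segment hu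
      rw [dist_eq_norm, dist_eq_norm, dist_eq_norm] at this
      rw [norm_sub_rev u, norm_sub_rev y]
      linarith [norm_nonneg (u - y)]
    calc ‖fderiv ℝ f u - fderiv ℝ f x‖ ≤ L * ‖u - x‖ := hf'.norm_sub_le (hseg hu) hx
      _ ≤ L * ‖y - x‖ := by gcongr
  calc ‖f y - f x - fderiv ℝ f x (y - x)‖ ≤ L * ‖y - x‖ * ‖y - x‖ :=
        (convex_segment x y).norm_image_sub_le_of_norm_fderiv_le' (fun u hu => hf u (hseg hu))
          hbound (left_mem_segment ℝ x y) (right_mem_segment ℝ x y)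
    _ = L * ‖y - x‖ ^ 2 := by ring

end Taylor

section Gradient

variable {E : Type*} [NormedAddCommGroup E] [InnerProductSpace ℝ E]

theorem real_inner_le_mul_norm_sq_add_norm_sq_div (g d : E) {s : ℝ} (hs : 0 < s) :
    ⟪g, d⟫_ℝ ≤ s / 2 * ‖g‖ ^ 2 + ‖d‖ ^ 2 / (2 * s) := by
  have hsq : s / 2 * ‖g‖ ^ 2 + ‖d‖ ^ 2 / (2 * s) - ‖g‖ * ‖d‖ = (s * ‖g‖ - ‖d‖) ^ 2 / (2 * s) := by
    field_simp
    ring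
  have : 0 ≤ (s * ‖g‖ - ‖d‖) ^ 2 / (2 * s) := by positivity
  linarith [real_inner_le_norm g d]

variable [CompleteSpace E]

theorem ContDiff.continuous_gradient {φ : E → ℝ} (hφ : ContDiff ℝ 1 φ) :
    Continuous (gradient φ) :=
  (InnerProductSpace.toDual ℝ E).symm.continuous.comp (hφ.continuous_fderiv one_ne_zero)

theorem ContDiff.exists_sub_le_inner_gradient_add_sq [ProperSpace E] {φ : E → ℝ}
    (hφ : ContDiff ℝ 2 φ) {K : Set E} (hK : IsCompact K) :
    ∃ C ≥ 0, ∀ x ∈ K, ∀ y ∈ K, φ y - φ x ≤ ⟪gradient φ x, y - x⟫_ℝ + C * ‖y - x‖ ^ 2 := by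
  obtain ⟨R, hR⟩ := hK.isBounded.subset_closedBall 0
  obtain ⟨L, hL⟩ := (hφ.fderiv_right (m := 1) le_rfl).locallyLipschitz.locallyLipschitzOn
    |>.exists_lipschitzOnWith_of_compact (isCompact_closedBall (0 : E) R)
  refine ⟨L, L.coe_nonneg, fun x hx y hy => ?_⟩
  have hT := (convex_closedBall (0 : E) R).norm_sub_sub_fderiv_le_of_lipschitzOnWith
    (fun z _ => (hφ.differentiable two_ne_zero) z) hL (hR hx) (hR hy)
  rw [inner_gradient_left]
  linarith [le_abs_self (φ y - φ x - fderiv ℝ φ x (y - x)), Real.norm_eq_abs _ ▸ hT]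

end Gradient

theorem Continuous.integrable_of_ae_mem_compact {X G : Type*} [TopologicalSpace X] [T2Space X]
    [MeasurableSpace X] [OpensMeasurableSpace X] [NormedAddCommGroup G] {μ : Measure X}
    [IsFiniteMeasure μ] {f : X → G} (hf : Continuous f) {K : Set X} (hK : IsCompact K)
    (hμK : ∀ᵐ x ∂μ, x ∈ K) : Integrable f μ := by
  simpa [IntegrableOn, Measure.restrict_eq_self_of_ae_mem hμK] using
    hf.continuousOn.integrableOn_compact (μ := μ) hK

theorem integral_withDensity_one_add_mul {X : Type*} [MeasurableSpace X] {μ : Measure X}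
    {h φ : X → ℝ} (hh : Measurable h) {ε : ℝ} (hε : ∀ x, 0 ≤ 1 + ε * h x)
    (hφ : Integrable φ μ) (hhφ : Integrable (fun x => h x * φ x) μ) :
    ∫ x, φ x ∂μ.withDensity (fun x => ENNReal.ofReal (1 + ε * h x)) =
      ∫ x, φ x ∂μ + ε * ∫ x, h x * φ x ∂μ := by
  rw [integral_withDensity_eq_integral_toReal_smul (by fun_prop)
    (ae_of_all _ fun _ => ENNReal.ofReal_lt_top)]
  simp_rw [ENNReal.toReal_ofReal (hε _), smul_eq_mul, add_mul, one_mul, mul_assoc]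
  rw [integral_add hφ (hhφ.const_mul ε), integral_const_mul]

theorem eventually_forall_one_add_mul_nonneg {X : Type*} {h : X → ℝ} {M : ℝ}
    (hM : ∀ x, |h x| ≤ M) : ∀ᶠ ε in 𝓝 (0 : ℝ), ∀ x, 0 ≤ 1 + ε * h x := by
  have hlim : Tendsto (fun ε : ℝ => |ε| * M) (𝓝 0) (𝓝 0) := by
    simpa using (continuous_abs.mul continuous_const).tendsto (0 : ℝ) (f := fun ε : ℝ => |ε| * M)
  filter_upwards [hlim.eventually (eventually_le_nhds one_pos)] with ε hε x
  have : |ε * h x| ≤ |ε| * M := by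
    rw [abs_mul]; exact mul_le_mul_of_nonneg_left (hM x) (abs_nonneg ε)
  linarith [neg_abs_le (ε * h x)]

section Coupling

variable {E : Type*} [NormedAddCommGroup E] [InnerProductSpace ℝ E] [FiniteDimensional ℝ E]
  [MeasurableSpace E] [BorelSpace E]

theorem integral_sub_integral_le_of_coupling {μ ν : Measure E} [IsFiniteMeasure μ]
    {γ : Measure (E × E)} (hγ₁ : γ.map Prod.fst = μ) (hγ₂ : γ.map Prod.snd = ν)
    {K : Set E} (hK : IsCompact K) (hμK : ∀ᵐ x ∂μ, x ∈ K) (hνK : ∀ᵐ x ∂ν, x ∈ K)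
    {φ : E → ℝ} (hφ : ContDiff ℝ 1 φ) {C : ℝ} (hC : 0 ≤ C)
    (htaylor : ∀ x ∈ K, ∀ y ∈ K, φ y - φ x ≤ ⟪gradient φ x, y - x⟫_ℝ + C * ‖y - x‖ ^ 2)
    (hgrad : ∫ x, ‖gradient φ x‖ ^ 2 ∂μ ≤ 1) {s : ℝ} (hs : 0 < s)
    (hcost : ∫ p, ‖p.1 - p.2‖ ^ 2 ∂γ ≤ s ^ 2) :
    ∫ x, φ x ∂ν - ∫ x, φ x ∂μ ≤ s + C * s ^ 2 := by
  subst hγ₁ hγ₂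
  have := Measure.isFiniteMeasure_of_map measurable_fst.aemeasurable (μ := γ)
  have hγK : ∀ᵐ p ∂γ, p ∈ K ×ˢ K :=
    (ae_of_ae_map measurable_fst.aemeasurable hμK).and
      (ae_of_ae_map measurable_snd.aemeasurable hνK)
  have hint {g : E × E → ℝ} (hg : Continuous g) : Integrable g γ :=
    hg.integrable_of_ae_mem_compact (hK.prod hK) hγK
  have hφc := hφ.continuous
  have hgradc := hφ.continuous_gradient
  rw [integral_map measurable_fst.aemeasurable (by fun_prop)] at hgrad
  have hpt : ∀ᵐ p ∂γ, φ p.2 - φ p.1 ≤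
      s / 2 * ‖gradient φ p.1‖ ^ 2 + ‖p.1 - p.2‖ ^ 2 / (2 * s) + C * ‖p.1 - p.2‖ ^ 2 := by
    filter_upwards [hγK] with p hp
    have hinner := real_inner_le_mul_norm_sq_add_norm_sq_div (gradient φ p.1) (p.2 - p.1) hs
    rw [norm_sub_rev] at hinner
    have hφp := htaylor p.1 hp.1 p.2 hp.2
    rw [norm_sub_rev] at hφp
    linarith
  calc ∫ x, φ x ∂γ.map Prod.snd - ∫ x, φ x ∂γ.map Prod.fst = ∫ p, φ p.2 - φ p.1 ∂γ := by
        rw [integral_map measurable_snd.aemeasurable hφc.aestronglyMeasurable,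
          integral_map measurable_fst.aemeasurable hφc.aestronglyMeasurable,
          integral_sub (hint (by fun_prop)) (hint (by fun_prop))]
    _ ≤ ∫ p, (s / 2 * ‖gradient φ p.1‖ ^ 2 + ‖p.1 - p.2‖ ^ 2 / (2 * s)
          + C * ‖p.1 - p.2‖ ^ 2) ∂γ :=
        integral_mono_ae (hint (by fun_prop)) (hint (by fun_prop)) hpt
    _ = s / 2 * ∫ p, ‖gradient φ p.1‖ ^ 2 ∂γ + (∫ p, ‖p.1 - p.2‖ ^ 2 ∂γ) / (2 * s)
          + C * ∫ p, ‖p.1 - p.2‖ ^ 2 ∂γ := by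
        rw [integral_add (hint (by fun_prop)) (hint (by fun_prop)),
          integral_add (hint (by fun_prop)) (hint (by fun_prop)),
          integral_const_mul, integral_div, integral_const_mul]
    _ ≤ s / 2 * 1 + s ^ 2 / (2 * s) + C * s ^ 2 := by gcongr
    _ = s + C * s ^ 2 := by field_simp; ring

end Coupling

theorem exists_coupling_integral_le_of_W2_lt {n : ℕ} {μ ν : Measure (EuclideanSpace ℝ (Fin n))}
    {s : ℝ} (h : W2 μ ν < ENNReal.ofReal s) :
    ∃ γ : Measure (EuclideanSpace ℝ (Fin n) × EuclideanSpace ℝ (Fin n)),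
      γ.map Prod.fst = μ ∧ γ.map Prod.snd = ν ∧ ∫ p, ‖p.1 - p.2‖ ^ 2 ∂γ ≤ s ^ 2 := by
  obtain ⟨⟨γ, hγ₁, hγ₂⟩, hlt⟩ := iInf_lt_iff.mp h
  refine ⟨γ, hγ₁, hγ₂, ?_⟩
  have hs : 0 ≤ s := (ENNReal.ofReal_pos.mp (zero_le.trans_lt h)).le
  rw [one_div, ENNReal.rpow_inv_lt_iff two_pos, ENNReal.rpow_two, ← ENNReal.ofReal_pow hs] at hlt
  rw [integral_eq_lintegral_of_nonneg_ae (ae_of_all _ fun _ => by positivity) (by fun_prop)]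
  exact ENNReal.toReal_le_of_le_ofReal (by positivity) hlt.le

theorem ofReal_le_liminf_of_lt_imp_le_add {f : ℝ → ENNReal} {a C : ℝ}
    (hf : ∀ c : ℝ, ∀ᶠ ε in 𝓝[>] 0, f ε < ENNReal.ofReal c → a ≤ c + C * c ^ 2 * ε) :
    ENNReal.ofReal a ≤ liminf f (𝓝[>] 0) := by
  refine le_of_forall_gt_imp_ge_of_dense fun b hb => ?_
  rcases eq_or_ne b ⊤ with rfl | hb_top
  · exact le_top
  rw [← ENNReal.ofReal_toReal hb_top] at hb ⊢
  have hfreq := (frequently_lt_of_liminf_lt (by isBoundedDefault) hb).and_eventually (hf b.toReal)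
  have hcont : Continuous fun ε : ℝ => b.toReal + C * b.toReal ^ 2 * ε := by fun_prop
  have hlim : Tendsto (fun ε : ℝ => b.toReal + C * b.toReal ^ 2 * ε) (𝓝[>] 0) (𝓝 b.toReal) :=
    tendsto_nhdsWithin_of_tendsto_nhds (by simpa using hcont.tendsto 0)
  exact ENNReal.ofReal_le_ofReal
    (ge_of_tendsto_of_frequently hlim (hfreq.mono fun _ hε => hε.2 hε.1))

theorem Hm1_le_liminf_W2_general {n : ℕ} (μ : Measure (EuclideanSpace ℝ (Fin n)))
    (hfin : IsFiniteMeasure μ)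
    (hsupp : ∃ K : Set (EuclideanSpace ℝ (Fin n)), IsCompact K ∧ μ Kᶜ = 0)
    (h : EuclideanSpace ℝ (Fin n) → ℝ)
    (hmeas : Measurable h) (hbdd : ∃ M : ℝ, ∀ x, |h x| ≤ M) :
    Hm1Mu μ h ≤
      Filter.liminf
        (fun ε : ℝ =>
          W2 μ (μ.withDensity fun x => ENNReal.ofReal (1 + ε * h x)) / ENNReal.ofReal ε)
        (nhdsWithin 0 (Set.Ioi 0)) := by
  obtain ⟨K, hK, hKnull⟩ := hsupp
  obtain ⟨M, hM⟩ := hbdd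
  have hμK : ∀ᵐ x ∂μ, x ∈ K := ae_iff.mpr hKnull
  refine iSup_le fun ⟨φ, hφ, hgrad⟩ => ?_
  have hφ₂ : ContDiff ℝ 2 φ := hφ.of_le (WithTop.coe_le_coe.mpr le_top)
  have hφc := hφ₂.continuous
  obtain ⟨C, hC, htaylor⟩ := hφ₂.exists_sub_le_inner_gradient_add_sq hK
  refine ofReal_le_liminf_of_lt_imp_le_add (C := C) fun c => ?_
  filter_upwards [self_mem_nhdsWithin, nhdsWithin_le_nhds (eventually_forall_one_add_mul_nonneg hM)]
    with ε (hε : 0 < ε) hdens hlt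
  have hc : 0 < c := ENNReal.ofReal_pos.mp (zero_le.trans_lt hlt)
  rw [ENNReal.div_lt_iff (Or.inl (ENNReal.ofReal_pos.mpr hε).ne') (Or.inl ENNReal.ofReal_ne_top),
    ← ENNReal.ofReal_mul hc.le] at hlt
  obtain ⟨γ, hγ₁, hγ₂, hcost⟩ := exists_coupling_integral_le_of_W2_lt hlt
  have hφint : Integrable φ μ := hφc.integrable_of_ae_mem_compact hK hμK
  have key := integral_sub_integral_le_of_coupling hγ₁ hγ₂ hK hμK
    ((withDensity_absolutelyContinuous μ _).ae_le hμK) (hφ₂.of_le one_le_two) hC htaylor hgrad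
    (mul_pos hc hε) hcost
  rw [integral_withDensity_one_add_mul hmeas hdens hφint
    (hφint.bdd_mul hmeas.aestronglyMeasurable (ae_of_all _ hM)), add_sub_cancel_left] at key
  refine le_of_mul_le_mul_left ?_ hε
  linarith

/-- Brenier-McCann remark: for a finite compactly supported Borel measure μ and a bounded
measurable `h` with `∫ h dμ = 0`, letting `μ_ε` have density `1 + εh` w.r.t. μ,
`‖h‖_{H^{-1}(μ)} ≤ liminf_{ε → 0⁺} W₂(μ, μ_ε)/ε`. -/
theorem Hm1_le_liminf_W2 {n : ℕ} (μ : Measure (EuclideanSpace ℝ (Fin n)))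
    (hfin : IsFiniteMeasure μ)
    (hsupp : ∃ K : Set (EuclideanSpace ℝ (Fin n)), IsCompact K ∧ μ Kᶜ = 0)
    (h : EuclideanSpace ℝ (Fin n) → ℝ)
    (hmeas : Measurable h) (hbdd : ∃ M : ℝ, ∀ x, |h x| ≤ M)
    (hzero : ∫ x, h x ∂μ = 0) :
    Hm1Mu μ h ≤
      Filter.liminf
        (fun ε : ℝ =>
          W2 μ (μ.withDensity fun x => ENNReal.ofReal (1 + ε * h x)) / ENNReal.ofReal ε)
        (nhdsWithin 0 (Set.Ioi 0)) :=
  Hm1_le_liminf_W2_general μ hfin hsupp h hmeas hbdd
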